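/- The area of the hexagon R_5^+ with vertices as above equals (5/2)·(sin(π/5) − tan(π/10)) + sin(π/10) − (1/2)·sin(π/5) ≈ 0.672288, which is strictly greater than (6/8)·sin(π/3) = 3√3/8 ≈ 0.649519, the area of the regular small hexagon. -/

import Mathlib

/-!
Write `s = sin (π/10)`, `c = cos (π/10)` and `q = (1 - s) / (2c)`; the vertices of `R₅⁺` are
`(0, 0)`, `(±1/2, q)`, `(±s, c)` and `(0, 1)`. The hexagon is the region between the maximum of
the lines through its two lower edges (a convex function) and the minimum of the lines through its
four upper edges (a concave one). This region is convex and contains the vertices; conversely, each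
boundary function meets each of its lines at the two vertices of that edge, so by convexity
(concavity) it coincides with that line in between, and every vertical segment of the region joins
two points of edges. By Cavalieri the area is a sum of trapezoids,
`(1/2 - s)(q + c) + s(c + 1) - q/2 = s + c/2 - sq`; this equals the stated closed form because
`4s² + 2s = 1` (as `s = (√5 - 1)/4`), and exceeds `3√3/8` numerically.
-/

open Real MeasureTheory

/-- The vertices of the hexagon `R₅⁺`: the regular small pentagon of unit diameter
(circumradius `1/(2 cos (π/10))`, with one vertex at the origin) together with the
added vertex `(0, 1)`. -/
noncomputable def R5plus : Fin 6 → ℝ × ℝ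
  | 0 => (0, 0)
  | 1 => (Real.sin (2 * π / 5) / (2 * Real.cos (π / 10)),
          (1 - Real.cos (2 * π / 5)) / (2 * Real.cos (π / 10)))
  | 2 => (Real.sin (4 * π / 5) / (2 * Real.cos (π / 10)),
          (1 - Real.cos (4 * π / 5)) / (2 * Real.cos (π / 10)))
  | 3 => (0, 1)
  | 4 => (-(Real.sin (4 * π / 5) / (2 * Real.cos (π / 10))),
          (1 - Real.cos (4 * π / 5)) / (2 * Real.cos (π / 10)))
  | 5 => (-(Real.sin (2 * π / 5) / (2 * Real.cos (π / 10))),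
          (1 - Real.cos (2 * π / 5)) / (2 * Real.cos (π / 10)))

open Set

section ClosedRegionBetween

variable {α : Type*}

def closedRegionBetween (f g : α → ℝ) (s : Set α) : Set (α × ℝ) :=
  {p | p.1 ∈ s ∧ p.2 ∈ Icc (f p.1) (g p.1)}

theorem volume_closedRegionBetween_eq_volume_regionBetween [MeasurableSpace α] {μ : Measure α}
    {f g : α → ℝ} {s : Set α} (hf : Measurable f) (hg : Measurable g) (hs : MeasurableSet s) :
    μ.prod volume (closedRegionBetween f g s) = μ.prod volume (regionBetween f g s) := by
  have hcc : MeasurableSet (closedRegionBetween f g s) := measurableSet_region_between_cc hf hg hs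
  rw [Measure.prod_apply hcc, Measure.prod_apply (measurableSet_regionBetween hf hg hs)]
  congr 1
  funext x
  by_cases hx : x ∈ s
  · simp only [closedRegionBetween, regionBetween, preimage, mem_ofPred_eq, hx, true_and]
    exact Real.volume_Icc.trans Real.volume_Ioo.symm
  · simp [closedRegionBetween, regionBetween, hx]

variable {E : Type*} [AddCommGroup E] [Module ℝ E] {f g : E → ℝ} {s : Set E}

theorem convex_closedRegionBetween (hf : ConvexOn ℝ s f) (hg : ConcaveOn ℝ s g) :
    Convex ℝ (closedRegionBetween f g s) := by
  convert hf.convex_epigraph.inter hg.convex_hypograph using 1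
  ext p
  simp only [closedRegionBetween, mem_Icc, mem_inter_iff, mem_ofPred_eq]
  tauto

theorem convexHull_eq_closedRegionBetween {P : Set (E × ℝ)} (hf : ConvexOn ℝ s f)
    (hg : ConcaveOn ℝ s g) (hP : P ⊆ closedRegionBetween f g s)
    (hfP : ∀ x ∈ s, (x, f x) ∈ convexHull ℝ P) (hgP : ∀ x ∈ s, (x, g x) ∈ convexHull ℝ P) :
    convexHull ℝ P = closedRegionBetween f g s := by
  refine (convexHull_min hP (convex_closedRegionBetween hf hg)).antisymm ?_
  rintro ⟨x, y⟩ ⟨hx, hy⟩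
  have hseg : (x, y) ∈ segment ℝ (x, f x) (x, g x) := by
    rw [← Prod.image_mk_segment_right, segment_eq_Icc (hy.1.trans hy.2)]
    exact mem_image_of_mem _ hy
  exact (convex_convexHull ℝ P).segment_subset (hfP x hx) (hgP x hx) hseg

end ClosedRegionBetween

section LineThrough

noncomputable def lineThrough (p q : ℝ × ℝ) (x : ℝ) : ℝ :=
  p.2 + (q.2 - p.2) / (q.1 - p.1) * (x - p.1)

variable {p q : ℝ × ℝ} {x : ℝ}

theorem lineThrough_left : lineThrough p q p.1 = p.2 := by simp [lineThrough]

theorem continuous_lineThrough : Continuous (lineThrough p q) := by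
  unfold lineThrough; fun_prop

theorem lineThrough_combo {a b : ℝ} (hab : a + b = 1) (x y : ℝ) :
    lineThrough p q (a * x + b * y) = a * lineThrough p q x + b * lineThrough p q y := by
  unfold lineThrough; linear_combination ((q.2 - p.2) / (q.1 - p.1) * p.1 - p.2) * hab

theorem convexOn_lineThrough : ConvexOn ℝ univ (lineThrough p q) :=
  ⟨convex_univ, fun x _ y _ _ _ _ _ hab => (lineThrough_combo hab x y).le⟩

theorem concaveOn_lineThrough : ConcaveOn ℝ univ (lineThrough p q) :=
  ⟨convex_univ, fun x _ y _ _ _ _ _ hab => (lineThrough_combo hab x y).ge⟩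

theorem mk_lineThrough_mem_segment (hx : x ∈ Icc p.1 q.1) :
    (x, lineThrough p q x) ∈ segment ℝ p q := by
  rcases (hx.1.trans hx.2).eq_or_lt with h | h
  · obtain rfl : x = p.1 := le_antisymm (h ▸ hx.2) hx.1
    rw [lineThrough_left]
    exact left_mem_segment ℝ p q
  · set t := (x - p.1) / (q.1 - p.1)
    have hd : q.1 - p.1 ≠ 0 := (sub_pos.2 h).ne'
    have ht : t * (q.1 - p.1) = x - p.1 := div_mul_cancel₀ _ hd
    refine ⟨1 - t, t, ?_, div_nonneg (sub_nonneg.2 hx.1) (sub_pos.2 h).le, by ring, ?_⟩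
    · rw [sub_nonneg, div_le_one (sub_pos.2 h)]; linarith [hx.2]
    · ext
      · simp only [Prod.fst_add, Prod.smul_fst, smul_eq_mul]; linear_combination ht
      · simp only [Prod.snd_add, Prod.smul_snd, smul_eq_mul, lineThrough]
        field_simp
        linear_combination (q.2 - p.2) * ht

theorem ConvexOn.eqOn_lineThrough {f : ℝ → ℝ} (hf : ConvexOn ℝ (Icc p.1 q.1) f)
    (hp : f p.1 ≤ p.2) (hq : f q.1 ≤ q.2) (hle : ∀ x, lineThrough p q x ≤ f x) :
    EqOn f (lineThrough p q) (Icc p.1 q.1) := by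
  intro x hx
  refine le_antisymm ?_ (hle x)
  have hpq : p.1 ≤ q.1 := hx.1.trans hx.2
  exact (hf.convex_epigraph.segment_subset ⟨left_mem_Icc.2 hpq, hp⟩ ⟨right_mem_Icc.2 hpq, hq⟩
    (mk_lineThrough_mem_segment hx)).2

theorem ConcaveOn.eqOn_lineThrough {g : ℝ → ℝ} (hg : ConcaveOn ℝ (Icc p.1 q.1) g)
    (hp : p.2 ≤ g p.1) (hq : q.2 ≤ g q.1) (hle : ∀ x, g x ≤ lineThrough p q x) :
    EqOn g (lineThrough p q) (Icc p.1 q.1) := by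
  intro x hx
  refine le_antisymm (hle x) ?_
  have hpq : p.1 ≤ q.1 := hx.1.trans hx.2
  exact (hg.convex_hypograph.segment_subset ⟨left_mem_Icc.2 hpq, hp⟩ ⟨right_mem_Icc.2 hpq, hq⟩
    (mk_lineThrough_mem_segment hx)).2

theorem mk_mem_convexHull_of_eqOn_lineThrough {P : Set (ℝ × ℝ)} {g : ℝ → ℝ} (hp : p ∈ P)
    (hq : q ∈ P) (hg : EqOn g (lineThrough p q) (Icc p.1 q.1)) (hx : x ∈ Icc p.1 q.1) :
    (x, g x) ∈ convexHull ℝ P := by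
  rw [hg hx]
  exact (convex_convexHull ℝ P).segment_subset (subset_convexHull ℝ P hp)
    (subset_convexHull ℝ P hq) (mk_lineThrough_mem_segment hx)

theorem integral_eq_of_eqOn_lineThrough {g : ℝ → ℝ} {a b ya yb : ℝ} (hab : a ≤ b)
    (hg : EqOn g (lineThrough (a, ya) (b, yb)) (Icc a b)) :
    ∫ x in a..b, g x = (b - a) * (ya + yb) / 2 := by
  rw [intervalIntegral.integral_congr (uIcc_of_le hab ▸ hg)]
  rcases hab.eq_or_lt with rfl | h
  · simp
  · have hd : b - a ≠ 0 := (sub_pos.2 h).ne'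
    simp only [lineThrough]
    rw [intervalIntegral.integral_add intervalIntegrable_const
      (Continuous.intervalIntegrable (by fun_prop) _ _)]
    simp only [intervalIntegral.integral_const_mul,
      intervalIntegral.integral_comp_sub_right fun x => x]
    simp only [intervalIntegral.integral_const, smul_eq_mul, sub_self, integral_id]
    field_simp
    ring

theorem le_lineThrough_iff {y : ℝ} (h : p.1 < q.1) :
    y ≤ lineThrough p q x ↔ (q.1 - p.1) * (y - p.2) ≤ (q.2 - p.2) * (x - p.1) := by
  rw [lineThrough, ← sub_le_iff_le_add', div_mul_eq_mul_div, le_div_iff₀ (sub_pos.2 h), mul_comm]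

theorem lineThrough_le_iff {y : ℝ} (h : p.1 < q.1) :
    lineThrough p q x ≤ y ↔ (q.2 - p.2) * (x - p.1) ≤ (q.1 - p.1) * (y - p.2) := by
  rw [lineThrough, ← le_sub_iff_add_le', div_mul_eq_mul_div, div_le_iff₀ (sub_pos.2 h),
    mul_comm (y - p.2)]

end LineThrough

namespace R5plus

noncomputable def s : ℝ := sin (π / 10)
noncomputable def c : ℝ := cos (π / 10)
noncomputable def q : ℝ := (1 - s) / (2 * c)

theorem c_pos : 0 < c := cos_pos_of_mem_Ioo ⟨by linarith [pi_pos], by linarith [pi_pos]⟩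

theorem c_sq : c ^ 2 = 1 - s ^ 2 := by rw [← sin_sq_add_cos_sq (π / 10), s, c]; ring

theorem sin_pi_div_five_eq : sin (π / 5) = 2 * s * c := by
  rw [show π / 5 = 2 * (π / 10) by ring, sin_two_mul, s, c]

theorem cos_pi_div_five_eq : cos (π / 5) = 1 - 2 * s ^ 2 := by
  rw [show π / 5 = 2 * (π / 10) by ring, cos_two_mul', s]
  linear_combination sin_sq_add_cos_sq (π / 10)

theorem s_eq : s = (√5 - 1) / 4 := by
  have h5 : √5 ^ 2 = 5 := sq_sqrt (by norm_num)
  have hs : 0 ≤ s := sin_nonneg_of_nonneg_of_le_pi (by positivity) (by linarith [pi_pos])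
  have hsq : s ^ 2 = ((√5 - 1) / 4) ^ 2 := by
    have := cos_pi_div_five_eq.symm.trans cos_pi_div_five
    linear_combination (-1 / 2 : ℝ) * this - h5 / 16
  have : 0 ≤ (√5 - 1) / 4 := by nlinarith [sqrt_nonneg 5]
  nlinarith

theorem s_quadratic : 4 * s ^ 2 + 2 * s = 1 := by
  have h5 : √5 ^ 2 = 5 := sq_sqrt (by norm_num)
  rw [s_eq]
  linear_combination h5 / 4

theorem s_bounds : 0.309 < s ∧ s < 0.3091 := by
  have h5 : √5 ^ 2 = 5 := sq_sqrt (by norm_num)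
  rw [s_eq]; constructor <;> nlinarith [sqrt_nonneg 5]

theorem c_bounds : 0.951 < c ∧ c < 0.9511 := by
  obtain ⟨h1, h2⟩ := s_bounds
  constructor <;> nlinarith [c_sq, c_pos]

theorem q_bounds : 0.3632 < q ∧ q < 0.3634 := by
  obtain ⟨h1, h2⟩ := s_bounds
  obtain ⟨h3, h4⟩ := c_bounds
  rw [q, lt_div_iff₀ (by linarith), div_lt_iff₀ (by linarith)]
  constructor <;> nlinarith

theorem R5plus_eq : R5plus = ![(0, 0), (1 / 2, q), (s, c), (0, 1), (-s, c), (-1 / 2, q)] := by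
  have hc : cos (π / 10) = c := rfl
  have hc₀ : c ≠ 0 := c_pos.ne'
  have hx₁ : sin (2 * π / 5) / (2 * cos (π / 10)) = 1 / 2 := by
    rw [show 2 * π / 5 = π / 2 - π / 10 by ring, sin_pi_div_two_sub, hc]
    field_simp
  have hy₁ : (1 - cos (2 * π / 5)) / (2 * cos (π / 10)) = q := by
    rw [show 2 * π / 5 = π / 2 - π / 10 by ring, cos_pi_div_two_sub]
    rfl
  have hx₂ : sin (4 * π / 5) / (2 * cos (π / 10)) = s := by
    rw [show 4 * π / 5 = π - π / 5 by ring, sin_pi_sub, sin_pi_div_five_eq, hc]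
    field_simp
  have hy₂ : (1 - cos (4 * π / 5)) / (2 * cos (π / 10)) = c := by
    rw [show 4 * π / 5 = π - π / 5 by ring, cos_pi_sub, cos_pi_div_five_eq, hc]
    field_simp
    linear_combination -2 * c_sq
  funext i
  fin_cases i <;> simp [R5plus, hx₁, hy₁, hx₂, hy₂, neg_div]

noncomputable def lower (x : ℝ) : ℝ :=
  max (lineThrough (-1 / 2, q) (0, 0) x) (lineThrough (0, 0) (1 / 2, q) x)

noncomputable def upper (x : ℝ) : ℝ :=
  min (min (lineThrough (-1 / 2, q) (-s, c) x) (lineThrough (-s, c) (0, 1) x))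
    (min (lineThrough (0, 1) (s, c) x) (lineThrough (s, c) (1 / 2, q) x))

theorem range_R5plus :
    range R5plus = {(0, 0), (1 / 2, q), (s, c), (0, 1), (-s, c), (-1 / 2, q)} := by
  simp only [R5plus_eq, Matrix.range_cons, Matrix.range_empty, union_empty, singleton_union]

theorem range_R5plus_subset_region :
    range R5plus ⊆ closedRegionBetween lower upper (Icc (-1 / 2) (1 / 2)) := by
  obtain ⟨hs₁, hs₂⟩ := s_bounds
  obtain ⟨hc₁, hc₂⟩ := c_bounds
  obtain ⟨hq₁, hq₂⟩ := q_bounds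
  rw [range_R5plus]
  simp only [insert_subset_iff, singleton_subset_iff, closedRegionBetween, mem_ofPred_eq, mem_Icc,
    lower, upper, max_le_iff, le_min_iff]
  have h₁ : (-1 / 2 : ℝ) < -s := by linarith
  have h₂ : -s < 0 := by linarith
  have h₃ : 0 < s := by linarith
  have h₄ : s < 1 / 2 := by linarith
  have h₅ : (-1 / 2 : ℝ) < 0 := by norm_num
  have h₆ : (0 : ℝ) < 1 / 2 := by norm_num
  simp (disch := assumption) only [le_lineThrough_iff, lineThrough_le_iff]
  and_intros <;> first | linarith | nlinarith

theorem convexOn_lower : ConvexOn ℝ univ lower :=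
  convexOn_lineThrough.sup convexOn_lineThrough

theorem concaveOn_upper : ConcaveOn ℝ univ upper :=
  (concaveOn_lineThrough.inf concaveOn_lineThrough).inf
    (concaveOn_lineThrough.inf concaveOn_lineThrough)

theorem continuous_lower : Continuous lower :=
  continuous_lineThrough.max continuous_lineThrough

theorem continuous_upper : Continuous upper :=
  (continuous_lineThrough.min continuous_lineThrough).min
    (continuous_lineThrough.min continuous_lineThrough)

theorem mem_range_R5plus {p : ℝ × ℝ}
    (hp : p ∈ ({(0, 0), (1 / 2, q), (s, c), (0, 1), (-s, c), (-1 / 2, q)} : Set (ℝ × ℝ))) :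
    p ∈ range R5plus :=
  range_R5plus ▸ hp

theorem lower_eqOn_edges :
    EqOn lower (lineThrough (-1 / 2, q) (0, 0)) (Icc (-1 / 2) 0) ∧
      EqOn lower (lineThrough (0, 0) (1 / 2, q)) (Icc 0 (1 / 2)) := by
  refine ⟨?_, ?_⟩ <;>
  exact (convexOn_lower.subset (subset_univ _) (convex_Icc _ _)).eqOn_lineThrough
    (range_R5plus_subset_region (mem_range_R5plus (by simp))).2.1
    (range_R5plus_subset_region (mem_range_R5plus (by simp))).2.1
    fun _ => by simp [lower]

theorem upper_eqOn_edges :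
    EqOn upper (lineThrough (-1 / 2, q) (-s, c)) (Icc (-1 / 2) (-s)) ∧
      EqOn upper (lineThrough (-s, c) (0, 1)) (Icc (-s) 0) ∧
      EqOn upper (lineThrough (0, 1) (s, c)) (Icc 0 s) ∧
      EqOn upper (lineThrough (s, c) (1 / 2, q)) (Icc s (1 / 2)) := by
  refine ⟨?_, ?_, ?_, ?_⟩ <;>
  exact (concaveOn_upper.subset (subset_univ _) (convex_Icc _ _)).eqOn_lineThrough
    (range_R5plus_subset_region (mem_range_R5plus (by simp))).2.2
    (range_R5plus_subset_region (mem_range_R5plus (by simp))).2.2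
    fun _ => by simp [upper]

theorem mk_lower_mem_convexHull {x : ℝ} (hx : x ∈ Icc (-1 / 2 : ℝ) (1 / 2)) :
    (x, lower x) ∈ convexHull ℝ (range R5plus) := by
  obtain ⟨hl₁, hl₂⟩ := lower_eqOn_edges
  rcases le_total x 0 with h | h
  · exact mk_mem_convexHull_of_eqOn_lineThrough (mem_range_R5plus (by simp))
      (mem_range_R5plus (by simp)) hl₁ ⟨hx.1, h⟩
  · exact mk_mem_convexHull_of_eqOn_lineThrough (mem_range_R5plus (by simp))
      (mem_range_R5plus (by simp)) hl₂ ⟨h, hx.2⟩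

theorem mk_upper_mem_convexHull {x : ℝ} (hx : x ∈ Icc (-1 / 2 : ℝ) (1 / 2)) :
    (x, upper x) ∈ convexHull ℝ (range R5plus) := by
  obtain ⟨hu₁, hu₂, hu₃, hu₄⟩ := upper_eqOn_edges
  rcases le_total x (-s) with h₁ | h₁
  · exact mk_mem_convexHull_of_eqOn_lineThrough (mem_range_R5plus (by simp))
      (mem_range_R5plus (by simp)) hu₁ ⟨hx.1, h₁⟩
  rcases le_total x 0 with h₂ | h₂
  · exact mk_mem_convexHull_of_eqOn_lineThrough (mem_range_R5plus (by simp))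
      (mem_range_R5plus (by simp)) hu₂ ⟨h₁, h₂⟩
  rcases le_total x s with h₃ | h₃
  · exact mk_mem_convexHull_of_eqOn_lineThrough (mem_range_R5plus (by simp))
      (mem_range_R5plus (by simp)) hu₃ ⟨h₂, h₃⟩
  · exact mk_mem_convexHull_of_eqOn_lineThrough (mem_range_R5plus (by simp))
      (mem_range_R5plus (by simp)) hu₄ ⟨h₃, hx.2⟩

theorem convexHull_range_R5plus :
    convexHull ℝ (range R5plus) = closedRegionBetween lower upper (Icc (-1 / 2) (1 / 2)) :=
  convexHull_eq_closedRegionBetween (convexOn_lower.subset (subset_univ _) (convex_Icc _ _))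
    (concaveOn_upper.subset (subset_univ _) (convex_Icc _ _)) range_R5plus_subset_region
    (fun _ => mk_lower_mem_convexHull) (fun _ => mk_upper_mem_convexHull)

theorem integral_lower : ∫ x in (-1 / 2)..(1 / 2), lower x = q / 2 := by
  obtain ⟨hl₁, hl₂⟩ := lower_eqOn_edges
  rw [← intervalIntegral.integral_add_adjacent_intervals (b := 0)
    (continuous_lower.intervalIntegrable _ _) (continuous_lower.intervalIntegrable _ _),
    integral_eq_of_eqOn_lineThrough (by norm_num) hl₁,
    integral_eq_of_eqOn_lineThrough (by norm_num) hl₂]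
  ring

theorem integral_upper :
    ∫ x in (-1 / 2)..(1 / 2), upper x = (1 / 2 - s) * (q + c) + s * (c + 1) := by
  obtain ⟨hs₁, hs₂⟩ := s_bounds
  obtain ⟨hu₁, hu₂, hu₃, hu₄⟩ := upper_eqOn_edges
  have hi : ∀ a b : ℝ, IntervalIntegrable upper volume a b :=
    fun a b => continuous_upper.intervalIntegrable a b
  rw [← intervalIntegral.integral_add_adjacent_intervals (b := 0) (hi _ _) (hi _ _),
    ← intervalIntegral.integral_add_adjacent_intervals (a := -1 / 2) (b := -s) (hi _ _) (hi _ _),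
    ← intervalIntegral.integral_add_adjacent_intervals (a := 0) (b := s) (hi _ _) (hi _ _),
    integral_eq_of_eqOn_lineThrough (by linarith) hu₁,
    integral_eq_of_eqOn_lineThrough (by linarith) hu₂,
    integral_eq_of_eqOn_lineThrough (by linarith) hu₃,
    integral_eq_of_eqOn_lineThrough (by linarith) hu₄]
  ring

theorem volume_convexHull_range_R5plus :
    volume (convexHull ℝ (range R5plus)) = ENNReal.ofReal (s + c / 2 - s * q) := by
  have hle : ∀ x ∈ Icc (-1 / 2 : ℝ) (1 / 2), lower x ≤ upper x := fun x hx =>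
    (convexHull_range_R5plus ▸ mk_lower_mem_convexHull hx).2.2
  rw [convexHull_range_R5plus, Measure.volume_eq_prod,
    volume_closedRegionBetween_eq_volume_regionBetween continuous_lower.measurable
      continuous_upper.measurable measurableSet_Icc,
    volume_regionBetween_eq_integral continuous_lower.integrableOn_Icc
      continuous_upper.integrableOn_Icc measurableSet_Icc hle,
    integral_Icc_eq_integral_Ioc, ← intervalIntegral.integral_of_le (by norm_num),
    Pi.sub_def, intervalIntegral.integral_sub (continuous_upper.intervalIntegrable _ _)
      (continuous_lower.intervalIntegrable _ _), integral_upper, integral_lower]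
  ring_nf

theorem area_formula :
    (5 / 2 : ℝ) * (sin (π / 5) - tan (π / 10)) + sin (π / 10) - (1 / 2) * sin (π / 5)
      = s + c / 2 - s * q := by
  have hc : c ≠ 0 := c_pos.ne'
  rw [tan_eq_sin_div_cos, sin_pi_div_five_eq, ← s, ← c, q]
  field_simp
  linear_combination (8 * s - 1) * c_sq + (1 - 2 * s) * s_quadratic

theorem three_mul_sqrt_three_div_eight_lt : 3 * √3 / 8 < s + c / 2 - s * q := by
  obtain ⟨hs₁, hs₂⟩ := s_bounds
  obtain ⟨hc₁, hc₂⟩ := c_bounds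
  obtain ⟨hq₁, hq₂⟩ := q_bounds
  have h3 : √3 < 1.7321 := by nlinarith [sq_sqrt (show (0 : ℝ) ≤ 3 by norm_num), sqrt_nonneg 3]
  nlinarith

end R5plus

/-- The area of the hexagon `R₅⁺` equals
`(5/2)(sin(π/5) - tan(π/10)) + sin(π/10) - (1/2) sin(π/5)`, which is strictly greater than
`(6/8) sin(π/3) = 3√3/8`, the area of the regular small hexagon. -/
theorem R5plus_area :
    (volume (convexHull ℝ (Set.range R5plus))).toReal =
        (5 / 2 : ℝ) * (Real.sin (π / 5) - Real.tan (π / 10))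
          + Real.sin (π / 10) - (1 / 2) * Real.sin (π / 5) ∧
    (6 / 8 : ℝ) * Real.sin (π / 3) = 3 * Real.sqrt 3 / 8 ∧
    3 * Real.sqrt 3 / 8 <
      (5 / 2 : ℝ) * (Real.sin (π / 5) - Real.tan (π / 10))
        + Real.sin (π / 10) - (1 / 2) * Real.sin (π / 5) := by
  rw [R5plus.area_formula]
  have hlt := R5plus.three_mul_sqrt_three_div_eight_lt
  refine ⟨?_, by rw [sin_pi_div_three]; ring, hlt⟩
  rw [R5plus.volume_convexHull_range_R5plus,
    ENNReal.toReal_ofReal ((by positivity : (0 : ℝ) ≤ 3 * √3 / 8).trans hlt.le)]
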